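/- In PG(3,q) with q = 2^h, h > 2, the set C(σ) = {(1, x, x^σ, x^{σ+1}) : x ∈ F_q} ∪ {(0,0,0,1)}, where σ is a generator of Aut(F_q) (i.e. σ: x ↦ x^{2^e} with gcd(e,h)=1), is a (q+1)-arc: no 4 of its points are coplanar. -/

import Mathlib

open scoped LinearAlgebra.Projectivization

variable {F : Type*} [Field F]

/-- A point set `K` of a projective space `PG(n,q)` is a `k`-arc if it has `k ≥ n+1` points
and no `n+1` of its points lie on a hyperplane, i.e. every `n+1` of its points span. -/
def IsArc {F V : Type*} [Field F] [AddCommGroup V] [Module F V] (m : ℕ) (K : Set (ℙ F V)) :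
    Prop :=
  m + 1 ≤ K.ncard ∧
    ∀ S : Finset (ℙ F V), ↑S ⊆ K → S.card = m + 1 → (⨆ p ∈ S, p.submodule) = ⊤

lemma casse_vec_ne_zero (x : F) (e : ℕ) : (![1, x, x ^ 2 ^ e, x ^ 2 ^ e * x] : Fin 4 → F) ≠ 0 := by
  intro h
  have := congrFun h 0
  simp at this

lemma e3_ne_zero : (![0, 0, 0, 1] : Fin 4 → F) ≠ 0 := by
  intro h
  have := congrFun h 3
  simp at this

/-- The Casse–Glynn arc `C(σ) = {(1, x, x^σ, x^{σ+1}) : x ∈ F_q} ∪ {(0,0,0,1)}` in `PG(3,q)`,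
where `σ : x ↦ x^{2^e}`. -/
def casseGlynnSet (F : Type*) [Field F] (e : ℕ) : Set (ℙ F (Fin 4 → F)) :=
  (Set.range fun x : F =>
      Projectivization.mk F ![1, x, x ^ 2 ^ e, x ^ 2 ^ e * x] (casse_vec_ne_zero x e)) ∪
    {Projectivization.mk F ![0, 0, 0, 1] e3_ne_zero}

/-! ### Auxiliary algebraic lemmas -/

lemma CG.pow2_inj [CharP F 2] (N : ℕ) {a b : F} (hab : a ^ 2 ^ N = b ^ 2 ^ N) : a = b := by
  have h2 : (a - b) ^ 2 ^ N = 0 := by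
    rw [sub_pow_char_pow, hab, sub_self]
  have := pow_eq_zero_iff (Nat.pos_of_ne_zero (by positivity)).ne' |>.mp h2
  exact sub_eq_zero.mp this

lemma CG.pow2_mul_fix [CharP F 2] (k : ℕ) (t : F) (hk : t ^ 2 ^ k = t) (q : ℕ) :
    t ^ 2 ^ (k * q) = t := by
  induction q with
  | zero => simp
  | succ n ih =>
    rw [Nat.mul_succ, pow_add, pow_mul, ih, hk]

lemma CG.fixed_gcd [CharP F 2] (k l : ℕ) (t : F) (hk : t ^ 2 ^ k = t) (hl : t ^ 2 ^ l = t) :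
    t ^ 2 ^ Nat.gcd k l = t := by
  induction k, l using Nat.gcd.induction with
  | H0 n => simpa using hl
  | H1 m n hm ih =>
    rw [Nat.gcd_rec]
    refine ih ?_ hk
    · apply CG.pow2_inj (m * (n / m))
      rw [← pow_mul, ← pow_add, Nat.mod_add_div n m, hl, CG.pow2_mul_fix m t hk]

lemma CG.sigma_fix [Fintype F] [CharP F 2] {h e : ℕ} (hcard : Fintype.card F = 2 ^ h)
    (he : Nat.gcd e h = 1) {t : F} (ht : t ^ 2 ^ e = t) (ht0 : t ≠ 0) : t = 1 := by
  have hth : t ^ 2 ^ h = t := by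
    have := FiniteField.pow_card t
    rwa [hcard] at this
  have h2 : t ^ 2 ^ Nat.gcd e h = t := CG.fixed_gcd e h t ht hth
  rw [he, pow_one, pow_two] at h2
  exact mul_right_cancel₀ ht0 (h2.trans (one_mul t).symm)

lemma CG.sigma_inj [Fintype F] [CharP F 2] {h e : ℕ} (hcard : Fintype.card F = 2 ^ h)
    (he : Nat.gcd e h = 1) {a b : F} (ha : a ≠ 0) (hb : b ≠ 0)
    (hab : a ^ 2 ^ e * b = b ^ 2 ^ e * a) : a = b := by
  have hbq : b ^ 2 ^ e ≠ 0 := pow_ne_zero _ hb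
  have ht : (a / b) ^ 2 ^ e = a / b := by
    rw [div_pow, div_eq_div_iff hbq hb]
    linear_combination hab
  have := CG.sigma_fix hcard he ht (div_ne_zero ha hb)
  exact (div_eq_one_iff_eq hb).mp this

lemma CG.add_ne_zero_char2 [CharP F 2] {a b : F} (hab : a ≠ b) : a + b ≠ 0 := by
  intro h0
  rw [← CharTwo.sub_eq_add] at h0
  exact hab (sub_eq_zero.mp h0)

lemma CG.three_pts [Fintype F] [CharP F 2] {h e : ℕ} (hcard : Fintype.card F = 2 ^ h)
    (he : Nat.gcd e h = 1) {x1 x2 x3 a0 a1 a2 : F}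
    (h12 : x1 ≠ x2) (h13 : x1 ≠ x3) (h23 : x2 ≠ x3)
    (e1 : a0 + a1 * x1 + a2 * x1 ^ 2 ^ e = 0)
    (e2 : a0 + a1 * x2 + a2 * x2 ^ 2 ^ e = 0)
    (e3 : a0 + a1 * x3 + a2 * x3 ^ 2 ^ e = 0) :
    a0 = 0 ∧ a1 = 0 ∧ a2 = 0 := by
  have htwo : (2 : F) = 0 := CharTwo.two_eq_zero
  have hs : x1 + x2 ≠ 0 := CG.add_ne_zero_char2 h12
  have ht : x1 + x3 ≠ 0 := CG.add_ne_zero_char2 h13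
  have E12 : a1 * (x1 + x2) + a2 * (x1 + x2) ^ 2 ^ e = 0 := by
    rw [add_pow_char_pow]
    linear_combination e1 + e2 - a0 * htwo
  have E13 : a1 * (x1 + x3) + a2 * (x1 + x3) ^ 2 ^ e = 0 := by
    rw [add_pow_char_pow]
    linear_combination e1 + e3 - a0 * htwo
  have ha2 : a2 = 0 := by
    by_contra ha2
    have hcross : ((x1 + x2) ^ 2 ^ e * (x1 + x3)) * a2 = ((x1 + x3) ^ 2 ^ e * (x1 + x2)) * a2 := by
      linear_combination (x1 + x3) * E12 - (x1 + x2) * E13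
    have := CG.sigma_inj hcard he hs ht (mul_right_cancel₀ ha2 hcross)
    exact h23 (add_left_cancel this)
  subst ha2
  have ha1 : a1 = 0 := by
    have : a1 * (x1 + x2) = 0 := by linear_combination E12
    rcases mul_eq_zero.mp this with h' | h'
    · exact h'
    · exact absurd h' hs
  subst ha1
  exact ⟨by linear_combination e1, rfl, rfl⟩

lemma CG.four_pts [Fintype F] [CharP F 2] {h e : ℕ} (hcard : Fintype.card F = 2 ^ h)
    (he : Nat.gcd e h = 1) {x1 x2 x3 x4 a0 a1 a2 a3 : F}
    (h12 : x1 ≠ x2) (h13 : x1 ≠ x3) (h14 : x1 ≠ x4)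
    (h23 : x2 ≠ x3) (h24 : x2 ≠ x4) (h34 : x3 ≠ x4)
    (e1 : a0 + a1 * x1 + a2 * x1 ^ 2 ^ e + a3 * (x1 ^ 2 ^ e * x1) = 0)
    (e2 : a0 + a1 * x2 + a2 * x2 ^ 2 ^ e + a3 * (x2 ^ 2 ^ e * x2) = 0)
    (e3 : a0 + a1 * x3 + a2 * x3 ^ 2 ^ e + a3 * (x3 ^ 2 ^ e * x3) = 0)
    (e4 : a0 + a1 * x4 + a2 * x4 ^ 2 ^ e + a3 * (x4 ^ 2 ^ e * x4) = 0) :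
    a0 = 0 ∧ a1 = 0 ∧ a2 = 0 ∧ a3 = 0 := by
  have htwo : (2 : F) = 0 := CharTwo.two_eq_zero
  by_cases ha3 : a3 = 0
  · subst ha3
    obtain ⟨g0, g1, g2⟩ := CG.three_pts (a0 := a0) (a1 := a1) (a2 := a2) hcard he h12 h13 h23
      (by linear_combination e1) (by linear_combination e2) (by linear_combination e3)
    exact ⟨g0, g1, g2, rfl⟩
  exfalso
  set b : F := a2 / a3 with hb
  set c : F := a1 / a3 with hc
  set A0 : F := a0 / a3 with hA0
  have en : ∀ x : F, a0 + a1 * x + a2 * x ^ 2 ^ e + a3 * (x ^ 2 ^ e * x) = 0 →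
      A0 + c * x + b * x ^ 2 ^ e + x ^ 2 ^ e * x = 0 := by
    intro x hx
    rw [hA0, hc, hb]
    field_simp
    linear_combination hx
  have f1 := en x1 e1
  have f2 := en x2 e2
  have f3 := en x3 e3
  have f4 := en x4 e4
  set d : F := A0 + b * c with hd
  have key : ∀ x : F, A0 + c * x + b * x ^ 2 ^ e + x ^ 2 ^ e * x = 0 →
      (x + b) ^ 2 ^ e * (x + b) + (c + b ^ 2 ^ e) * (x + b) = d := by
    intro x hx
    rw [add_pow_char_pow, hd]
    linear_combination hx + (b ^ 2 ^ e * x + b ^ 2 ^ e * b - A0) * htwo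
  have k1 := key x1 f1
  have k2 := key x2 f2
  have k3 := key x3 f3
  have k4 := key x4 f4
  set u1 : F := x1 + b
  set u2 : F := x2 + b
  set u3 : F := x3 + b
  set u4 : F := x4 + b
  have hu12 : u1 ≠ u2 := fun hh => h12 (by simpa [u1, u2] using hh)
  have hu13 : u1 ≠ u3 := fun hh => h13 (by simpa [u1, u3] using hh)
  have hu14 : u1 ≠ u4 := fun hh => h14 (by simpa [u1, u4] using hh)
  have hu23 : u2 ≠ u3 := fun hh => h23 (by simpa [u2, u3] using hh)
  have hu24 : u2 ≠ u4 := fun hh => h24 (by simpa [u2, u4] using hh)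
  have hu34 : u3 ≠ u4 := fun hh => h34 (by simpa [u3, u4] using hh)
  by_cases hdz : d = 0
  · have root : ∀ u : F, u ≠ 0 → u ^ 2 ^ e * u + (c + b ^ 2 ^ e) * u = d →
        u ^ 2 ^ e = c + b ^ 2 ^ e := by
      intro u hu hk
      rw [hdz] at hk
      have : u * (u ^ 2 ^ e + (c + b ^ 2 ^ e)) = 0 := by linear_combination hk
      rcases mul_eq_zero.mp this with h' | h'
      · exact absurd h' hu
      · rw [← CharTwo.sub_eq_add] at h'
        exact sub_eq_zero.mp h'
    by_cases hz1 : u1 = 0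
    · have r2 := root u2 (fun hh => hu12 (hz1.trans hh.symm)) k2
      have r3 := root u3 (fun hh => hu13 (hz1.trans hh.symm)) k3
      exact hu23 (CG.pow2_inj e (r2.trans r3.symm))
    · by_cases hz2 : u2 = 0
      · have r1 := root u1 hz1 k1
        have r3 := root u3 (fun hh => hu23 (hz2.trans hh.symm)) k3
        exact hu13 (CG.pow2_inj e (r1.trans r3.symm))
      · have r1 := root u1 hz1 k1
        have r2 := root u2 hz2 k2
        exact hu12 (CG.pow2_inj e (r1.trans r2.symm))
  · have hz : ∀ u : F, u ^ 2 ^ e * u + (c + b ^ 2 ^ e) * u = d → u ≠ 0 := by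
      intro u hk hu0
      rw [hu0] at hk
      simp at hk
      exact hdz hk.symm
    have hz1 := hz u1 k1
    have hz2 := hz u2 k2
    have hz3 := hz u3 k3
    have hz4 := hz u4 k4
    have star : ∀ u v : F, u ^ 2 ^ e * u + (c + b ^ 2 ^ e) * u = d →
        v ^ 2 ^ e * v + (c + b ^ 2 ^ e) * v = d →
        (u + v) ^ 2 ^ e * (u * v) = d * (u + v) := by
      intro u v hu hv
      rw [add_pow_char_pow]
      linear_combination v * hu + u * hv - ((c + b ^ 2 ^ e) * u * v) * htwo
    have s12 := star u1 u2 k1 k2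
    have s34 := star u3 u4 k3 k4
    have s13 := star u1 u3 k1 k3
    have s24 := star u2 u4 k2 k4
    set A : F := (u1 + u2) * (u3 + u4) with hA
    set B : F := (u1 + u3) * (u2 + u4) with hB
    have hA0' : A ≠ 0 := mul_ne_zero (CG.add_ne_zero_char2 hu12) (CG.add_ne_zero_char2 hu34)
    have hB0' : B ≠ 0 := mul_ne_zero (CG.add_ne_zero_char2 hu13) (CG.add_ne_zero_char2 hu24)
    have hP : u1 * u2 * u3 * u4 ≠ 0 :=
      mul_ne_zero (mul_ne_zero (mul_ne_zero hz1 hz2) hz3) hz4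
    have hAeq : A ^ 2 ^ e * (u1 * u2 * u3 * u4) = d ^ 2 * A := by
      rw [hA, mul_pow]
      linear_combination ((u3 + u4) ^ 2 ^ e * (u3 * u4)) * s12 + (d * (u1 + u2)) * s34
    have hBeq : B ^ 2 ^ e * (u1 * u2 * u3 * u4) = d ^ 2 * B := by
      rw [hB, mul_pow]
      linear_combination ((u2 + u4) ^ 2 ^ e * (u2 * u4)) * s13 + (d * (u1 + u3)) * s24
    have hcross : (A ^ 2 ^ e * B) * (u1 * u2 * u3 * u4) =
        (B ^ 2 ^ e * A) * (u1 * u2 * u3 * u4) := by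
      linear_combination B * hAeq - A * hBeq
    have hAB : A = B := CG.sigma_inj hcard he hA0' hB0' (mul_right_cancel₀ hP hcross)
    have hC : (u1 + u4) * (u2 + u3) = 0 := by
      linear_combination - hAB + (A - u1 * u4 - u2 * u3) * htwo
    exact mul_ne_zero (CG.add_ne_zero_char2 hu14) (CG.add_ne_zero_char2 hu23) hC

/-! ### Span lemmas -/

lemma CG.span_top4 (w0 w1 w2 w3 : Fin 4 → F)
    (hinj : ∀ c : Fin 4 → F, (Matrix.of ![w0, w1, w2, w3]).mulVec c = 0 → c = 0) :
    (F ∙ w0) ⊔ ((F ∙ w1) ⊔ ((F ∙ w2) ⊔ (F ∙ w3))) = ⊤ := by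
  set M : Matrix (Fin 4) (Fin 4) F := Matrix.of ![w0, w1, w2, w3] with hM
  have hker : Function.Injective M.mulVec := by
    intro x y hxy
    have h0 : M.mulVec (x - y) = 0 := by
      rw [Matrix.mulVec_sub, hxy, sub_self]
    exact sub_eq_zero.mp (hinj (x - y) h0)
  have hU : IsUnit M := Matrix.mulVec_injective_iff_isUnit.mp hker
  have hsurj := Matrix.vecMul_surjective_iff_isUnit.mpr hU
  have hr : Submodule.span F (Set.range M) = ⊤ := by
    change Submodule.span F (Set.range M.row) = ⊤
    rw [← range_vecMulLinear]
    rw [LinearMap.range_eq_top]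
    intro y
    obtain ⟨c, hc⟩ := hsurj y
    exact ⟨c, hc⟩
  have hrange : Set.range M = {w0} ∪ ({w1} ∪ ({w2} ∪ {w3})) := by
    show Set.range ![w0, w1, w2, w3] = _
    simp [Matrix.range_cons, Matrix.range_cons_empty]
  rw [hrange, Submodule.span_union, Submodule.span_union, Submodule.span_union] at hr
  exact hr

lemma CG.span4affine [Fintype F] [CharP F 2] {h e : ℕ} (hcard : Fintype.card F = 2 ^ h)
    (he : Nat.gcd e h = 1) {x1 x2 x3 x4 : F}
    (h12 : x1 ≠ x2) (h13 : x1 ≠ x3) (h14 : x1 ≠ x4)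
    (h23 : x2 ≠ x3) (h24 : x2 ≠ x4) (h34 : x3 ≠ x4) :
    (F ∙ (![1, x1, x1 ^ 2 ^ e, x1 ^ 2 ^ e * x1] : Fin 4 → F)) ⊔
      ((F ∙ (![1, x2, x2 ^ 2 ^ e, x2 ^ 2 ^ e * x2] : Fin 4 → F)) ⊔
        ((F ∙ (![1, x3, x3 ^ 2 ^ e, x3 ^ 2 ^ e * x3] : Fin 4 → F)) ⊔
          (F ∙ (![1, x4, x4 ^ 2 ^ e, x4 ^ 2 ^ e * x4] : Fin 4 → F)))) = ⊤ := by
  apply CG.span_top4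
  intro c hc
  have g1 := congrFun hc 0
  have g2 := congrFun hc 1
  have g3 := congrFun hc 2
  have g4 := congrFun hc 3
  simp [Matrix.mulVec, dotProduct, Fin.sum_univ_four] at g1 g2 g3 g4
  obtain ⟨q0, q1, q2, q3⟩ := CG.four_pts (a0 := c 0) (a1 := c 1) (a2 := c 2) (a3 := c 3)
    hcard he h12 h13 h14 h23 h24 h34
    (by linear_combination g1) (by linear_combination g2)
    (by linear_combination g3) (by linear_combination g4)
  funext i
  fin_cases i <;> simpa using (by assumption : _ = (0 : F))

lemma CG.span3affine [Fintype F] [CharP F 2] {h e : ℕ} (hcard : Fintype.card F = 2 ^ h)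
    (he : Nat.gcd e h = 1) {x1 x2 x3 : F}
    (h12 : x1 ≠ x2) (h13 : x1 ≠ x3) (h23 : x2 ≠ x3) :
    (F ∙ (![1, x1, x1 ^ 2 ^ e, x1 ^ 2 ^ e * x1] : Fin 4 → F)) ⊔
      ((F ∙ (![1, x2, x2 ^ 2 ^ e, x2 ^ 2 ^ e * x2] : Fin 4 → F)) ⊔
        ((F ∙ (![1, x3, x3 ^ 2 ^ e, x3 ^ 2 ^ e * x3] : Fin 4 → F)) ⊔
          (F ∙ (![0, 0, 0, 1] : Fin 4 → F)))) = ⊤ := by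
  apply CG.span_top4
  intro c hc
  have g1 := congrFun hc 0
  have g2 := congrFun hc 1
  have g3 := congrFun hc 2
  have g4 := congrFun hc 3
  simp [Matrix.mulVec, dotProduct, Fin.sum_univ_four] at g1 g2 g3 g4
  -- g4 : c 3 = 0
  obtain ⟨q0, q1, q2⟩ := CG.three_pts (a0 := c 0) (a1 := c 1) (a2 := c 2)
    hcard he h12 h13 h23
    (by linear_combination g1 - (x1 ^ 2 ^ e * x1) * g4)
    (by linear_combination g2 - (x2 ^ 2 ^ e * x2) * g4)
    (by linear_combination g3 - (x3 ^ 2 ^ e * x3) * g4)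
  funext i
  fin_cases i
  · simpa using q0
  · simpa using q1
  · simpa using q2
  · simpa using g4

/-- In `PG(3,q)` with `q = 2^h`, `h > 2`, the set
`C(σ) = {(1, x, x^σ, x^{σ+1}) : x ∈ F_q} ∪ {(0,0,0,1)}`, where `σ : x ↦ x^{2^e}` is a
generator of `Aut(F_q)` (i.e. `gcd(e,h) = 1`), is a `(q+1)`-arc: no `4` of its points are
coplanar. -/
theorem casseGlynn_isArc [Fintype F] {h e : ℕ} (hh : 2 < h) (hcard : Fintype.card F = 2 ^ h)
    (he : Nat.gcd e h = 1) :
    (casseGlynnSet F e).ncard = 2 ^ h + 1 ∧ IsArc 3 (casseGlynnSet F e) := by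
  -- characteristic 2
  haveI hp2 : CharP F 2 := by
    obtain ⟨p, hp⟩ := CharP.exists F
    haveI := hp
    obtain ⟨n, hprime, hcardp⟩ := FiniteField.card F p
    have hdvd : p ∣ 2 ^ h := by
      rw [← hcard, hcardp]
      exact dvd_pow_self p (Nat.pos_of_ne_zero (by exact_mod_cast n.ne_zero)).ne'
    have hp2 : p = 2 :=
      (Nat.prime_dvd_prime_iff_eq hprime Nat.prime_two).mp (hprime.dvd_of_dvd_pow hdvd)
    rwa [hp2] at hp
  set mkx : F → ℙ F (Fin 4 → F) := fun x =>
    Projectivization.mk F ![1, x, x ^ 2 ^ e, x ^ 2 ^ e * x] (casse_vec_ne_zero x e) with hmkx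
  set pt : ℙ F (Fin 4 → F) := Projectivization.mk F ![0, 0, 0, 1] e3_ne_zero with hpt
  have hmkinj : Function.Injective mkx := by
    intro x y hxy
    rw [hmkx, Projectivization.mk_eq_mk_iff'] at hxy
    obtain ⟨a, ha⟩ := hxy
    have h0 := congrFun ha 0
    have h1 := congrFun ha 1
    simp at h0 h1
    rw [h0] at h1
    simpa using h1.symm
  have hptne : ∀ x : F, pt ≠ mkx x := by
    intro x hx
    rw [hpt, hmkx, Projectivization.mk_eq_mk_iff'] at hx
    obtain ⟨a, ha⟩ := hx
    have h0 := congrFun ha 0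
    have h3 := congrFun ha 3
    simp at h0
    simp [h0] at h3
  have hptnr : pt ∉ Set.range mkx := by
    rintro ⟨x, hx⟩
    exact hptne x hx.symm
  have hsetncard : (casseGlynnSet F e).ncard = 2 ^ h + 1 := by
    have hunion : casseGlynnSet F e = insert pt (Set.range mkx) := by
      rw [casseGlynnSet, Set.union_singleton]
    rw [hunion, Set.ncard_insert_of_notMem hptnr (Set.finite_range mkx)]
    rw [← Set.image_univ, Set.ncard_image_of_injective _ hmkinj, Set.ncard_univ,
      Nat.card_eq_fintype_card, hcard]
  refine ⟨hsetncard, ?_, ?_⟩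
  · rw [hsetncard]
    have : 2 ^ 3 ≤ 2 ^ h := Nat.pow_le_pow_right (by norm_num) (by omega)
    omega
  · intro S hS hScard
    classical
    obtain ⟨p1, T, hp1T, rfl, hT3⟩ := Finset.card_eq_succ.mp hScard
    obtain ⟨p2, p3, p4, h23, h24, h34, rfl⟩ := Finset.card_eq_three.mp hT3
    have h12 : p1 ≠ p2 := fun hh' => hp1T (by simp [hh'])
    have h13 : p1 ≠ p3 := fun hh' => hp1T (by simp [hh'])
    have h14 : p1 ≠ p4 := fun hh' => hp1T (by simp [hh'])
    have hm1 : p1 ∈ casseGlynnSet F e := hS (by simp)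
    have hm2 : p2 ∈ casseGlynnSet F e := hS (by simp)
    have hm3 : p3 ∈ casseGlynnSet F e := hS (by simp)
    have hm4 : p4 ∈ casseGlynnSet F e := hS (by simp)
    have hsup : (⨆ p ∈ (insert p1 {p2, p3, p4} : Finset (ℙ F (Fin 4 → F))), p.submodule) =
        p1.submodule ⊔ (p2.submodule ⊔ (p3.submodule ⊔ p4.submodule)) := by
      rw [Finset.iSup_insert, Finset.iSup_insert, Finset.iSup_insert, Finset.iSup_singleton]
    rw [hsup]
    have hmem : ∀ p : ℙ F (Fin 4 → F), p ∈ casseGlynnSet F e → (∃ x : F, p = mkx x) ∨ p = pt := by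
      intro p hp
      rcases hp with ⟨x, hx⟩ | hx
      · exact Or.inl ⟨x, hx.symm⟩
      · exact Or.inr hx
    have hxne : ∀ x y : F, mkx x ≠ mkx y → x ≠ y := fun x y hne hxy => hne (by rw [hxy])
    rcases hmem p1 hm1 with ⟨y1, rfl⟩ | rfl <;>
      rcases hmem p2 hm2 with ⟨y2, rfl⟩ | rfl <;>
        rcases hmem p3 hm3 with ⟨y3, rfl⟩ | rfl <;>
          rcases hmem p4 hm4 with ⟨y4, rfl⟩ | rfl
    -- 1: all affine
    · simp only [hmkx, Projectivization.submodule_mk]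
      exact CG.span4affine hcard he (hxne _ _ h12) (hxne _ _ h13) (hxne _ _ h14)
        (hxne _ _ h23) (hxne _ _ h24) (hxne _ _ h34)
    -- 2: p4 = pt
    · simp only [hmkx, hpt, Projectivization.submodule_mk]
      exact CG.span3affine hcard he (hxne _ _ h12) (hxne _ _ h13) (hxne _ _ h23)
    -- 3: p3 = pt
    · simp only [hmkx, hpt, Projectivization.submodule_mk]
      rw [show ∀ A B C D : Submodule F (Fin 4 → F), A ⊔ (B ⊔ (C ⊔ D)) = A ⊔ (B ⊔ (D ⊔ C)) from
        fun A B C D => by ac_rfl]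
      exact CG.span3affine hcard he (hxne _ _ h12) (hxne _ _ h14) (hxne _ _ h24)
    · exact absurd rfl h34
    -- p2 = pt
    · simp only [hmkx, hpt, Projectivization.submodule_mk]
      rw [show ∀ A B C D : Submodule F (Fin 4 → F), A ⊔ (B ⊔ (C ⊔ D)) = A ⊔ (C ⊔ (D ⊔ B)) from
        fun A B C D => by ac_rfl]
      exact CG.span3affine hcard he (hxne _ _ h13) (hxne _ _ h14) (hxne _ _ h34)
    · exact absurd rfl h24
    · exact absurd rfl h23
    · exact absurd rfl h23
    -- p1 = pt
    · simp only [hmkx, hpt, Projectivization.submodule_mk]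
      rw [show ∀ A B C D : Submodule F (Fin 4 → F), A ⊔ (B ⊔ (C ⊔ D)) = B ⊔ (C ⊔ (D ⊔ A)) from
        fun A B C D => by ac_rfl]
      exact CG.span3affine hcard he (hxne _ _ h23) (hxne _ _ h24) (hxne _ _ h34)
    · exact absurd rfl h14
    · exact absurd rfl h13
    · exact absurd rfl h13
    · exact absurd rfl h12
    · exact absurd rfl h12
    · exact absurd rfl h12
    · exact absurd rfl h12
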